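/- arXiv:1712.06363 — 3 statements merged into one kernel-verified Lean document; each statement's English description precedes it below -/
import Mathlib

section
/- Let X be a graph as in the context and fix a vertex x₀. Then N₃(x₀) = c₃(x₀) − (deg(x₀)−2)·c₁(x₀) + (Δ_X c₁)(x₀). -/
/-- A graph in the sense of Serre: an edge set with origin/terminus maps and a
fixed-point-free involution `bar` satisfying `o e = t (bar e)`.
Loops and multiple edges are allowed. -/
structure SerreGraph where
  V : Type
  E : Type
  o : E → V
  t : E → V
  bar : E → E
  bar_ne : ∀ e, bar e ≠ e
  bar_bar : ∀ e, bar (bar e) = e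
  o_bar : ∀ e, o e = t (bar e)

namespace SerreGraph

variable (X : SerreGraph)

/-- The set of edges emanating from `x`. -/
def edgesAt (x : X.V) : Set X.E := {e | X.o e = x}

/-- The degree of a vertex. -/
noncomputable def deg (x : X.V) : ℕ := Nat.card (X.edgesAt x)

/-- A sequence of `m` edges is a path when consecutive edges are composable. -/
def IsPath {m : ℕ} (p : Fin m → X.E) : Prop :=
  ∀ (i : ℕ) (h : i + 1 < m), X.t (p ⟨i, by omega⟩) = X.o (p ⟨i + 1, h⟩)

/-- No backtracking: no edge is followed by its reversal. -/
def NoBacktrack {m : ℕ} (p : Fin m → X.E) : Prop :=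
  ∀ (i : ℕ) (h : i + 1 < m), p ⟨i + 1, h⟩ ≠ X.bar (p ⟨i, by omega⟩)

/-- A geodesic loop at `x`: a closed path starting and ending at `x` with no
backtracking. -/
def IsGeodesicLoopAt {m : ℕ} (x : X.V) (p : Fin m → X.E) : Prop :=
  X.IsPath p ∧ X.NoBacktrack p ∧
    ∀ (h : 0 < m), X.o (p ⟨0, h⟩) = x ∧ X.t (p ⟨m - 1, by omega⟩) = x

/-- A path has a tail when its last edge is the reversal of its first edge. -/
def HasTail {m : ℕ} (p : Fin m → X.E) : Prop :=
  ∃ (h : 0 < m), p ⟨m - 1, by omega⟩ = X.bar (p ⟨0, h⟩)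

/-- `c m x` is the number of geodesic loops of length `m` starting at `x`. -/
noncomputable def c (m : ℕ) (x : X.V) : ℕ :=
  Nat.card {p : Fin m → X.E // X.IsGeodesicLoopAt x p}

/-- `N m x` is the number of closed geodesics of length `m` starting at `x`,
i.e. geodesic loops with no tail. -/
noncomputable def N (m : ℕ) (x : X.V) : ℕ :=
  Nat.card {p : Fin m → X.E // X.IsGeodesicLoopAt x p ∧ ¬ X.HasTail p}

/-- The formal combinatorial Laplacian applied to a function on vertices:
`(Δ f)(x) = deg(x)·f(x) − Σ_{e ∈ E_x} f(t(e))`. -/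
noncomputable def lap (f : X.V → ℤ) (x : X.V) : ℤ :=
  (X.deg x : ℤ) * f x - ∑ᶠ e ∈ X.edgesAt x, f (X.t e)

/-- Connectedness: any two vertices are joined by a path. -/
def Connected : Prop :=
  ∀ x y : X.V, x = y ∨ ∃ (m : ℕ) (p : Fin m → X.E) (h : 0 < m),
    X.IsPath p ∧ X.o (p ⟨0, h⟩) = x ∧ X.t (p ⟨m - 1, by omega⟩) = y

end SerreGraph

/-!
A geodesic loop of length 3 at `x₀` with a tail is `(e, l, ē)`, where `e ∈ E_{x₀}` and `l` is a
loop at `t(e)` other than `e` and `ē`. The pairs `(e, l)` with `e ∈ E_{x₀}` and `l` a loop at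
`t(e)` number `∑_{e ∈ E_{x₀}} c₁(t(e)) = deg(x₀) c₁(x₀) - (Δ_X c₁)(x₀)`, and those with `l = e` or
`l = ē` are the loops `e` at `x₀`, each counted twice. Hence
`c₃(x₀) - N₃(x₀) = deg(x₀) c₁(x₀) - (Δ_X c₁)(x₀) - 2 c₁(x₀)`.
-/

theorem Nat.card_eq_card_subtype_add_card_subtype_add_card_subtype_not {α : Type*} [Finite α]
    {p q : α → Prop} (h : ∀ a, p a → ¬q a) :
    Nat.card α = Nat.card {a // p a} + Nat.card {a // q a} + Nat.card {a // ¬p a ∧ ¬q a} := by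
  classical
  have hpq : Disjoint p q :=
    Pi.disjoint_iff.2 fun a => Prop.disjoint_iff.2 fun ⟨hp, hq⟩ => h a hp hq
  rw [← Nat.card_sum, ← Nat.card_sum]
  exact Nat.card_congr <| (Equiv.sumCompl fun a => p a ∨ q a).symm.trans <|
    (subtypeOrEquiv p q hpq).sumCongr (Equiv.subtypeEquivRight fun _ => not_or)

namespace SerreGraph

variable (X : SerreGraph)

lemma o_bar_eq_t (e : X.E) : X.o (X.bar e) = X.t e := by
  rw [X.o_bar, X.bar_bar]

lemma t_bar (e : X.E) : X.t (X.bar e) = X.o e := (X.o_bar e).symm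

lemma bar_injective : Function.Injective X.bar :=
  Function.LeftInverse.injective X.bar_bar

def loopsAt (x : X.V) : Set X.E := {e | X.o e = x ∧ X.t e = x}

lemma loopsAt_subset_edgesAt (x : X.V) : X.loopsAt x ⊆ X.edgesAt x := fun _ h => h.1

def edgesAtStep (x : X.V) : ℕ → Set X.E
  | 0 => X.edgesAt x
  | k + 1 => ⋃ e ∈ edgesAtStep x k, X.edgesAt (X.t e)

variable {X}

lemma finite_edgesAtStep (hfin : ∀ x, (X.edgesAt x).Finite) (x : X.V) (k : ℕ) :
    (X.edgesAtStep x k).Finite := by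
  induction k with
  | zero => exact hfin x
  | succ k ih => exact ih.biUnion fun e _ => hfin (X.t e)

lemma mem_edgesAtStep {m : ℕ} {x : X.V} {p : Fin m → X.E} (hp : X.IsPath p)
    (hx : ∀ h : 0 < m, X.o (p ⟨0, h⟩) = x) (i : ℕ) (hi : i < m) :
    p ⟨i, hi⟩ ∈ X.edgesAtStep x i := by
  induction i with
  | zero => exact hx hi
  | succ i ih => exact Set.mem_biUnion (ih (by omega)) (hp i hi).symm

lemma finite_setOf_isPath (hfin : ∀ x, (X.edgesAt x).Finite) (m : ℕ) (x : X.V) :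
    {p : Fin m → X.E | X.IsPath p ∧ ∀ h : 0 < m, X.o (p ⟨0, h⟩) = x}.Finite :=
  (Set.Finite.pi' fun i : Fin m => finite_edgesAtStep hfin x i).subset
    fun _ ⟨hp, hx⟩ i => mem_edgesAtStep hp hx i i.2

lemma finite_setOf_isGeodesicLoopAt (hfin : ∀ x, (X.edgesAt x).Finite) (m : ℕ) (x : X.V) :
    {p : Fin m → X.E | X.IsGeodesicLoopAt x p}.Finite :=
  (finite_setOf_isPath hfin m x).subset fun _ hp => ⟨hp.1, fun h => (hp.2.2 h).1⟩

lemma c_one (x : X.V) : X.c 1 x = Nat.card (X.loopsAt x) :=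
  Nat.card_congr
    { toFun := fun p => ⟨p.1 0, p.2.2.2 one_pos⟩
      invFun := fun e => ⟨fun _ => e.1, fun i hi => by omega, fun i hi => by omega, fun _ => e.2⟩
      left_inv := fun p => Subtype.ext (funext fun i => by rw [Subsingleton.elim i 0])
      right_inv := fun _ => rfl }

lemma isGeodesicLoopAt_three_iff {x : X.V} {p : Fin 3 → X.E} :
    X.IsGeodesicLoopAt x p ↔
      X.o (p 0) = x ∧ X.t (p 0) = X.o (p 1) ∧ X.t (p 1) = X.o (p 2) ∧ X.t (p 2) = x ∧
        p 1 ≠ X.bar (p 0) ∧ p 2 ≠ X.bar (p 1) := by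
  constructor
  · rintro ⟨hp, hb, hx⟩
    exact ⟨(hx three_pos).1, hp 0 (by omega), hp 1 (by omega), (hx three_pos).2,
      hb 0 (by omega), hb 1 (by omega)⟩
  · rintro ⟨h0, h01, h12, h2, hb01, hb12⟩
    refine ⟨fun i hi => ?_, fun i hi => ?_, fun _ => ⟨h0, h2⟩⟩
    · obtain rfl | rfl : i = 0 ∨ i = 1 := by omega
      exacts [h01, h12]
    · obtain rfl | rfl : i = 0 ∨ i = 1 := by omega
      exacts [hb01, hb12]

lemma hasTail_three_iff {p : Fin 3 → X.E} : X.HasTail p ↔ p 2 = X.bar (p 0) :=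
  ⟨fun ⟨_, h⟩ => h, fun h => ⟨three_pos, h⟩⟩

lemma isGeodesicLoopAt_three_and_hasTail_iff {x : X.V} {p : Fin 3 → X.E} :
    X.IsGeodesicLoopAt x p ∧ X.HasTail p ↔
      X.o (p 0) = x ∧ p 1 ∈ X.loopsAt (X.t (p 0)) ∧ p 1 ≠ p 0 ∧ p 1 ≠ X.bar (p 0) ∧
        p 2 = X.bar (p 0) := by
  rw [isGeodesicLoopAt_three_iff, hasTail_three_iff]
  constructor
  · rintro ⟨⟨h0, h01, h12, -, hb01, hb12⟩, h2⟩
    rw [h2, X.o_bar_eq_t] at h12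
    refine ⟨h0, ⟨h01.symm, h12⟩, fun h => hb12 ?_, hb01, h2⟩
    rw [h2, h]
  · rintro ⟨h0, ⟨h01, h11⟩, hne, hb01, h2⟩
    refine ⟨⟨h0, h01.symm, ?_, ?_, hb01, fun h => hne (X.bar_injective ?_)⟩, h2⟩
    · rw [h2, X.o_bar_eq_t, h11]
    · rw [h2, X.t_bar, h0]
    · rw [← h, h2]

variable (X) in
noncomputable def numTailed (m : ℕ) (x : X.V) : ℕ :=
  Nat.card {p : Fin m → X.E // X.IsGeodesicLoopAt x p ∧ X.HasTail p}

lemma c_eq_N_add_numTailed {m : ℕ} {x : X.V}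
    (h : {p : Fin m → X.E | X.IsGeodesicLoopAt x p}.Finite) :
    X.c m x = X.N m x + X.numTailed m x := by
  have := Set.ncard_inter_add_ncard_sdiff_eq_ncard _ {p | X.HasTail p} h
  rw [← Nat.card_coe_set_eq, ← Nat.card_coe_set_eq, ← Nat.card_coe_set_eq] at this
  exact this.symm.trans (add_comm _ _)

lemma natCard_sigma_loopsAt (hfin : ∀ x, (X.edgesAt x).Finite) (x : X.V) :
    Nat.card (Σ e : X.edgesAt x, X.loopsAt (X.t e)) = ∑ᶠ e ∈ X.edgesAt x, X.c 1 (X.t e) := by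
  have := (hfin x).fintype
  have (y : X.V) : Finite (X.loopsAt y) :=
    ((hfin y).subset (X.loopsAt_subset_edgesAt y)).to_subtype
  rw [Nat.card_sigma, ← finsum_set_coe_eq_finsum_mem, finsum_eq_sum_of_fintype]
  simp only [c_one]

lemma natCard_sigma_loopsAt_eq_self (x : X.V) :
    Nat.card {q : Σ e : X.edgesAt x, X.loopsAt (X.t e) // (q.2 : X.E) = q.1} =
      Nat.card (X.loopsAt x) :=
  Nat.card_congr
    { toFun := fun q => ⟨q.1.1, q.1.1.2,
        q.1.2.2.1.symm.trans ((congrArg X.o q.2).trans q.1.1.2)⟩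
      invFun := fun e => ⟨⟨⟨e.1, e.2.1⟩, ⟨e.1, e.2.1.trans e.2.2.symm, rfl⟩⟩, rfl⟩
      left_inv := fun q => Subtype.ext (Sigma.subtype_ext rfl q.2.symm)
      right_inv := fun _ => rfl }

lemma natCard_sigma_loopsAt_eq_bar (x : X.V) :
    Nat.card {q : Σ e : X.edgesAt x, X.loopsAt (X.t e) // (q.2 : X.E) = X.bar q.1} =
      Nat.card (X.loopsAt x) :=
  Nat.card_congr
    { toFun := fun q => ⟨q.1.1, q.1.1.2,
        q.1.2.2.2.symm.trans ((congrArg X.t q.2).trans ((X.t_bar _).trans q.1.1.2))⟩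
      invFun := fun e => ⟨⟨⟨e.1, e.2.1⟩, ⟨X.bar e.1,
        X.o_bar_eq_t e.1, (X.t_bar e.1).trans (e.2.1.trans e.2.2.symm)⟩⟩, rfl⟩
      left_inv := fun q => Subtype.ext (Sigma.subtype_ext rfl q.2.symm)
      right_inv := fun _ => rfl }

lemma natCard_sigma_loopsAt_ne (x : X.V) :
    Nat.card {q : Σ e : X.edgesAt x, X.loopsAt (X.t e) //
      (q.2 : X.E) ≠ q.1 ∧ (q.2 : X.E) ≠ X.bar q.1} = X.numTailed 3 x :=
  Nat.card_congr
    { toFun := fun q => ⟨![q.1.1, q.1.2, X.bar q.1.1],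
        isGeodesicLoopAt_three_and_hasTail_iff.2 ⟨q.1.1.2, q.1.2.2, q.2.1, q.2.2, rfl⟩⟩
      invFun := fun p =>
        have hp := isGeodesicLoopAt_three_and_hasTail_iff.1 p.2
        ⟨⟨⟨p.1 0, hp.1⟩, ⟨p.1 1, hp.2.1⟩⟩, hp.2.2.1, hp.2.2.2.1⟩
      left_inv := fun _ => rfl
      right_inv := fun p => Subtype.ext <| funext fun i => by
        fin_cases i
        exacts [rfl, rfl, (isGeodesicLoopAt_three_and_hasTail_iff.1 p.2).2.2.2.2.symm] }

lemma numTailed_three_add_two_mul (hfin : ∀ x, (X.edgesAt x).Finite) (x : X.V) :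
    X.numTailed 3 x + 2 * X.c 1 x = ∑ᶠ e ∈ X.edgesAt x, X.c 1 (X.t e) := by
  have := (hfin x).to_subtype
  have (y : X.V) : Finite (X.loopsAt y) :=
    ((hfin y).subset (X.loopsAt_subset_edgesAt y)).to_subtype
  rw [← natCard_sigma_loopsAt hfin,
    Nat.card_eq_card_subtype_add_card_subtype_add_card_subtype_not
      (p := fun q => (q.2 : X.E) = q.1) (q := fun q => (q.2 : X.E) = X.bar q.1)
      fun _ h h' => X.bar_ne _ (h'.symm.trans h),
    natCard_sigma_loopsAt_eq_self, natCard_sigma_loopsAt_eq_bar, natCard_sigma_loopsAt_ne, c_one]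
  ring

end SerreGraph

theorem N_three_formula_general (X : SerreGraph)
    (hfin : ∀ x : X.V, (X.edgesAt x).Finite)
    (x₀ : X.V) :
    (X.N 3 x₀ : ℤ) =
      (X.c 3 x₀ : ℤ) - ((X.deg x₀ : ℤ) - 2) * X.c 1 x₀
        + X.lap (fun x => (X.c 1 x : ℤ)) x₀ := by
  have hc := X.c_eq_N_add_numTailed (X.finite_setOf_isGeodesicLoopAt hfin 3 x₀)
  have hT := X.numTailed_three_add_two_mul hfin x₀
  rw [SerreGraph.lap, ← Nat.cast_finsum_mem (hfin x₀), ← hT, hc]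
  push_cast
  ring

/-- `N₃(x₀) = c₃(x₀) − (deg(x₀)−2)·c₁(x₀) + (Δ_X c₁)(x₀)`. -/
theorem N_three_formula (X : SerreGraph) [Countable X.V]
    (hconn : X.Connected)
    (hfin : ∀ x : X.V, (X.edgesAt x).Finite)
    (hbd : ∃ M : ℕ, ∀ x : X.V, X.deg x ≤ M)
    (hdeg1 : ∀ x : X.V, X.deg x ≠ 1)
    (x₀ : X.V) :
    (X.N 3 x₀ : ℤ) =
      (X.c 3 x₀ : ℤ) - ((X.deg x₀ : ℤ) - 2) * X.c 1 x₀
        + X.lap (fun x => (X.c 1 x : ℤ)) x₀ :=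
  N_three_formula_general X hfin x₀
end

section
/- Let X be a simple graph as in the context and let α = (M + √(M² + 4M))/2. Then for every integer m ≥ 0, the operator norm of C_m satisfies ‖C_m‖ ≤ α^m. -/
noncomputable section

/-- The Hilbert space `ℓ²(V)` of square-summable complex functions on `V`. -/
abbrev ℓ2 (V : Type) : Type := lp (fun _ : V => ℂ) 2

namespace SimpleGraph

variable {V : Type} (G : SimpleGraph V)

/-- The degree of a vertex. -/
def gdeg (v : V) : ℕ := Nat.card (G.neighborSet v)

/-- A geodesic (non-backtracking) path of length `m` in a simple graph,
encoded as its sequence of `m + 1` vertices. -/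
def IsGeoPath {m : ℕ} (p : Fin (m + 1) → V) : Prop :=
  (∀ (i : ℕ) (h : i + 1 < m + 1), G.Adj (p ⟨i, by omega⟩) (p ⟨i + 1, h⟩)) ∧
  (∀ (i : ℕ) (h : i + 2 < m + 1), p ⟨i + 2, h⟩ ≠ p ⟨i, by omega⟩)

/-- The number of geodesic loops (closed non-backtracking paths) of length `m`
at `x`. -/
def cLoop (m : ℕ) (x : V) : ℕ :=
  Nat.card {p : Fin (m + 1) → V // G.IsGeoPath p ∧ p 0 = x ∧ p (Fin.last m) = x}

/-- The formal combinatorial Laplacian applied to `cLoop m`: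
`(Δ_X c_m)(x) = deg(x)·c_m(x) − Σ_{y ∼ x} c_m(y)`. -/
def lapc (m : ℕ) (x : V) : ℤ :=
  (G.gdeg x : ℤ) * G.cLoop m x - ∑ᶠ y ∈ G.neighborSet x, (G.cLoop m y : ℤ)

/-- The defining property of the geodesic-path-counting operators `C_m` on
`ℓ²(V)`: `(C_m f)(x) = Σ_c f(t(c))`, the sum over all geodesic paths `c` of
length `m` starting at `x` (so `C₀ = I` and `C₁ = A_X`). -/
def IsGeoCountOp (C : ℕ → (ℓ2 V →L[ℂ] ℓ2 V)) : Prop :=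
  ∀ (m : ℕ) (f : ℓ2 V) (x : V),
    C m f x =
      ∑ᶠ p : {p : Fin (m + 1) → V // G.IsGeoPath p ∧ p 0 = x}, f (p.1 (Fin.last m))

/-- The defining property of the adjacency operator on `ℓ²(V)`:
`(A f)(x) = Σ_{y ∼ x} f(y)`. -/
def IsAdjOp (A : ℓ2 V →L[ℂ] ℓ2 V) : Prop :=
  ∀ (f : ℓ2 V) (x : V), A f x = ∑ᶠ y ∈ G.neighborSet x, f y

/-- The defining property of the valency operator on `ℓ²(V)`:
`(D f)(x) = deg(x)·f(x)`. -/
def IsValOp (D : ℓ2 V →L[ℂ] ℓ2 V) : Prop :=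
  ∀ (f : ℓ2 V) (x : V), D f x = (G.gdeg x : ℂ) * f x

end SimpleGraph

/-!
Numbering the neighbours of each vertex by `Fin M`, a geodesic path of length `m` from `x` is
determined by its sequence of `m` neighbour indices, so at most `M ^ m` such paths start at any
vertex, and by reversal at most `M ^ m` end at any vertex. For an operator that sums over paths
with both fibre bounds, the Schur test (Cauchy–Schwarz over the paths from `x`, then summing over
`x` and regrouping by endpoint) gives `‖C_m‖ ≤ M ^ m`, and `M ≤ α` because `√(M² + 4M) ≥ M`.
-/

open scoped ENNReal

theorem enorm_finsum_sq_le_card_mul_tsum {ι E : Type*} [Finite ι] [SeminormedAddCommGroup E]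
    (a : ι → E) : ‖∑ᶠ i, a i‖ₑ ^ 2 ≤ Nat.card ι * ∑' i, ‖a i‖ₑ ^ 2 := by
  cases nonempty_fintype ι
  rw [finsum_eq_sum_of_fintype, tsum_fintype, Nat.card_eq_fintype_card]
  have h : ‖∑ i, a i‖₊ ^ 2 ≤ Fintype.card ι * ∑ i, ‖a i‖₊ ^ 2 :=
    (pow_le_pow_left₀ (by positivity) (nnnorm_sum_le _ _) 2).trans sq_sum_le_card_mul_sum_sq
  simp only [enorm_eq_nnnorm]
  exact_mod_cast h

theorem lp.tsum_enorm_sq_eq {α : Type*} {E : α → Type*} [∀ i, NormedAddCommGroup (E i)]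
    (f : lp E 2) : ∑' i, ‖f i‖ₑ ^ 2 = ‖f‖ₑ ^ 2 := by
  have hp : (0 : ℝ) < (2 : ℝ≥0∞).toReal := by norm_num
  have hsum : Summable fun i => ‖f i‖ ^ 2 := by simpa using (lp.memℓp f).summable hp
  have hnorm : ‖f‖ ^ 2 = ∑' i, ‖f i‖ ^ 2 := by simpa using lp.norm_rpow_eq_tsum hp f
  simp only [← ofReal_norm, ← ENNReal.ofReal_pow (norm_nonneg _), hnorm,
    ENNReal.ofReal_tsum_of_nonneg (fun i => sq_nonneg _) hsum]

section FiberSum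

variable {P V : Type*}

theorem ENNReal.tsum_comp_le_card_mul_tsum (t : P → V) {K : ℕ}
    (ht : ∀ y, ENat.card (t ⁻¹' {y}) ≤ K) (F : V → ℝ≥0∞) :
    ∑' p, F (t p) ≤ K * ∑' y, F y :=
  calc ∑' p, F (t p) = ∑' y, ∑' p : t ⁻¹' {y}, F (t p) := (ENNReal.tsum_fiberwise _ t).symm
    _ = ∑' y, (ENat.card (t ⁻¹' {y}) : ℝ≥0∞) * F y := tsum_congr fun y => by
        rw [← ENNReal.tsum_const]
        exact tsum_congr fun p => congrArg F p.2
    _ ≤ ∑' y, (K : ℝ≥0∞) * F y := ENNReal.tsum_le_tsum fun y => by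
        gcongr
        exact_mod_cast ht y
    _ = K * ∑' y, F y := ENNReal.tsum_mul_left

theorem lp.norm_le_of_eq_finsum_fiber {E : Type*} [NormedAddCommGroup E] (s t : P → V) {K : ℕ}
    (hs : ∀ x, ENat.card (s ⁻¹' {x}) ≤ K) (ht : ∀ y, ENat.card (t ⁻¹' {y}) ≤ K)
    {f g : lp (fun _ : V => E) 2} (hg : ∀ x, g x = ∑ᶠ p : s ⁻¹' {x}, f (t p)) :
    ‖g‖ ≤ K * ‖f‖ := by
  have hsq : ‖g‖ₑ ^ 2 ≤ (K * ‖f‖ₑ) ^ 2 :=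
    calc ‖g‖ₑ ^ 2 = ∑' x, ‖g x‖ₑ ^ 2 := (lp.tsum_enorm_sq_eq g).symm
      _ ≤ ∑' x, K * ∑' p : s ⁻¹' {x}, ‖f (t p)‖ₑ ^ 2 := ENNReal.tsum_le_tsum fun x => by
          have : Finite (s ⁻¹' {x}) :=
            ENat.card_lt_top.mp ((hs x).trans_lt (ENat.natCast_lt_top K))
          rw [hg x]
          refine (enorm_finsum_sq_le_card_mul_tsum _).trans ?_
          gcongr
          exact_mod_cast (ENat.card_eq_coe_natCard (s ⁻¹' {x})) ▸ hs x
      _ = K * ∑' p, ‖f (t p)‖ₑ ^ 2 := by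
          rw [ENNReal.tsum_mul_left, ENNReal.tsum_fiberwise (fun p => ‖f (t p)‖ₑ ^ 2) s]
      _ ≤ K * (K * ∑' y, ‖f y‖ₑ ^ 2) := by
          gcongr
          exact ENNReal.tsum_comp_le_card_mul_tsum t ht fun y => ‖f y‖ₑ ^ 2
      _ = (K * ‖f‖ₑ) ^ 2 := by rw [lp.tsum_enorm_sq_eq]; ring
  rw [ENNReal.pow_le_pow_left_iff two_ne_zero, ← ofReal_norm, ← ofReal_norm,
    ← ENNReal.ofReal_natCast, ← ENNReal.ofReal_mul (Nat.cast_nonneg K)] at hsq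
  exact (ENNReal.ofReal_le_ofReal_iff (by positivity)).mp hsq

theorem ContinuousLinearMap.opNorm_le_of_apply_eq_finsum_fiber {𝕜 E : Type*}
    [NontriviallyNormedField 𝕜] [NormedAddCommGroup E] [NormedSpace 𝕜 E] (s t : P → V) {K : ℕ}
    (hs : ∀ x, ENat.card (s ⁻¹' {x}) ≤ K) (ht : ∀ y, ENat.card (t ⁻¹' {y}) ≤ K)
    (T : lp (fun _ : V => E) 2 →L[𝕜] lp (fun _ : V => E) 2)
    (hT : ∀ f x, T f x = ∑ᶠ p : s ⁻¹' {x}, f (t p)) : ‖T‖ ≤ K :=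
  T.opNorm_le_bound (Nat.cast_nonneg K) fun f => lp.norm_le_of_eq_finsum_fiber s t hs ht (hT f)

end FiberSum

namespace SimpleGraph

variable {V : Type} {G : SimpleGraph V}

variable (G) in
abbrev GeoPath (m : ℕ) : Type := {p : Fin (m + 1) → V // G.IsGeoPath p}

theorem IsGeoPath.rev {m : ℕ} {p : Fin (m + 1) → V} (hp : G.IsGeoPath p) :
    G.IsGeoPath fun i => p i.rev := by
  refine ⟨fun i h => ?_, fun i h => ?_⟩
  · convert (hp.1 (m - i - 1) (by omega)).symm using 2 <;> ext <;> simp only [Fin.val_rev] <;> omega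
  · convert (hp.2 (m - i - 2) (by omega)).symm using 2 <;> ext <;> simp only [Fin.val_rev] <;> omega

theorem enatCard_geoPathsFrom_le {M : ℕ} (hfin : ∀ v, (G.neighborSet v).Finite)
    (hdeg : ∀ v, G.gdeg v ≤ M) (m : ℕ) (x : V) :
    ENat.card ((fun p : G.GeoPath m => p.1 0) ⁻¹' {x}) ≤
      (M ^ m : ℕ) := by
  have (v : V) : Finite (G.neighborSet v) := hfin v
  let ι (v : V) : G.neighborSet v ↪ Fin M :=
    (Finite.equivFin _).toEmbedding.trans (Fin.castLEEmb (hdeg v))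
  have ι_eq {v w : V} (hvw : v = w) {a : G.neighborSet v} {b : G.neighborSet w}
      (hab : ι v a = ι w b) : (a : V) = b := by
    subst hvw
    exact congrArg Subtype.val ((ι v).injective hab)
  let code (p : (fun p : G.GeoPath m => p.1 0) ⁻¹' {x})
      (i : Fin m) : Fin M :=
    ι (p.1.1 i.castSucc) ⟨p.1.1 i.succ, p.1.2.1 i (by omega)⟩
  have code_injective : Function.Injective code := by
    intro p q hpq
    refine Subtype.ext (Subtype.ext (funext fun j => ?_))
    induction j using Fin.induction with
    | zero => exact p.2.trans q.2.symm
    | succ i ih => exact ι_eq ih (congrFun hpq i)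
  calc _ ≤ ENat.card (Fin m → Fin M) := ENat.card_le_card_of_injective code_injective
    _ = (M ^ m : ℕ) := by simp [ENat.card_eq_coe_fintype_card]

theorem enatCard_geoPathsTo_le {M : ℕ} (hfin : ∀ v, (G.neighborSet v).Finite)
    (hdeg : ∀ v, G.gdeg v ≤ M) (m : ℕ) (y : V) :
    ENat.card ((fun p : G.GeoPath m => p.1 (Fin.last m)) ⁻¹' {y}) ≤
      (M ^ m : ℕ) := by
  let reverse (p : (fun p : G.GeoPath m => p.1 (Fin.last m)) ⁻¹' {y}) :
      (fun p : G.GeoPath m => p.1 0) ⁻¹' {y} :=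
    ⟨⟨fun i => p.1.1 i.rev, p.1.2.rev⟩, by
      simpa only [Set.mem_preimage, Fin.rev_zero] using p.2⟩
  have reverse_injective : Function.Injective reverse := fun p q hpq =>
    Subtype.ext (Subtype.ext (funext fun j => by
      simpa only [reverse, Fin.rev_rev] using congrFun (congrArg (fun r => r.1.1) hpq) j.rev))
  exact (ENat.card_le_card_of_injective reverse_injective).trans
    (enatCard_geoPathsFrom_le hfin hdeg m y)

theorem IsGeoCountOp.apply_eq_finsum_fiber {C : ℕ → (ℓ2 V →L[ℂ] ℓ2 V)} (hC : G.IsGeoCountOp C)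
    (m : ℕ) (f : ℓ2 V) (x : V) :
    C m f x = ∑ᶠ p : (fun p : G.GeoPath m => p.1 0) ⁻¹' {x},
      f (p.1.1 (Fin.last m)) :=
  (hC m f x).trans
    (finsum_comp_equiv (Equiv.subtypeSubtypeEquivSubtypeInter G.IsGeoPath (· 0 = x))).symm

end SimpleGraph

theorem le_half_add_sqrt_sq_add_four_mul {a : ℝ} (ha : 0 ≤ a) :
    a ≤ (a + Real.sqrt (a ^ 2 + 4 * a)) / 2 := by
  have : a ≤ Real.sqrt (a ^ 2 + 4 * a) := Real.le_sqrt_of_sq_le (by linarith)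
  linarith

theorem C_norm_bound_general {V : Type} (G : SimpleGraph V)
    (hfin : ∀ v : V, (G.neighborSet v).Finite)
    (hbd : ∃ M₀ : ℕ, ∀ v : V, G.gdeg v ≤ M₀)
    (M : ℕ) (hM : M = sSup (Set.range fun v : V => G.gdeg v))
    (C : ℕ → (ℓ2 V →L[ℂ] ℓ2 V)) (hC : G.IsGeoCountOp C) :
    ∀ m : ℕ, ‖C m‖ ≤ (((M : ℝ) + Real.sqrt ((M : ℝ) ^ 2 + 4 * M)) / 2) ^ m := by
  intro m
  obtain ⟨M₀, hM₀⟩ := hbd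
  have hdeg (v : V) : G.gdeg v ≤ M := hM ▸ le_csSup ⟨M₀, Set.forall_mem_range.2 hM₀⟩ ⟨v, rfl⟩
  calc ‖C m‖ ≤ (M ^ m : ℕ) :=
        ContinuousLinearMap.opNorm_le_of_apply_eq_finsum_fiber _ _
          (G.enatCard_geoPathsFrom_le hfin hdeg m)
          (G.enatCard_geoPathsTo_le hfin hdeg m) (C m) (hC.apply_eq_finsum_fiber m)
    _ ≤ _ := by
      push_cast
      exact pow_le_pow_left₀ M.cast_nonneg (le_half_add_sqrt_sq_add_four_mul M.cast_nonneg) m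

/-- With `M = sup_x deg(x)` and `α = (M + √(M² + 4M))/2`, one has
`‖C_m‖ ≤ α^m` for all `m ≥ 0`. -/
theorem C_norm_bound {V : Type} (G : SimpleGraph V) [Countable V]
    (hconn : G.Connected)
    (hfin : ∀ v : V, (G.neighborSet v).Finite)
    (hbd : ∃ M₀ : ℕ, ∀ v : V, G.gdeg v ≤ M₀)
    (hdeg1 : ∀ v : V, G.gdeg v ≠ 1)
    (M : ℕ) (hM : M = sSup (Set.range fun v : V => G.gdeg v))
    (C : ℕ → (ℓ2 V →L[ℂ] ℓ2 V)) (hC : G.IsGeoCountOp C) :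
    ∀ m : ℕ, ‖C m‖ ≤ (((M : ℝ) + Real.sqrt ((M : ℝ) ^ 2 + 4 * M)) / 2) ^ m :=
  C_norm_bound_general G hfin hbd M hM C hC
end
end

section
/- Let A and Q be bounded operators on a Hilbert space, set f(u) = Au − Qu² and f′(u) = A − 2Qu for u ∈ ℂ. Then for every integer n ≥ 1, Σ_{j=0}^{n−1} f(u)^j f′(u) f(u)^{n−1−j} = n·f′(u)f(u)^{n−1} + u²·Σ_{j=1}^{n−1} j·f(u)^{n−1−j}[Q, A]f(u)^{j−1}, where [Q, A] = QA − AQ. -/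
/-!
Write `a = f(u)` and `b = f′(u)`; then `ab - ba = u²[Q, A]`. Moving `b` to the left through
`a ^ j` telescopes into `b a ^ j` plus `j` terms `a ^ k [a, b] a ^ (j - 1 - k)`, so summing over `j`
leaves `n • b a ^ (n - 1)` plus a double sum in which the commutator term sitting after `a ^ k`
occurs `n - 1 - k` times.
-/

open Finset

theorem Finset.sum_range_sum_range_eq_sum_nsmul {M : Type*} [AddCommMonoid M] (g : ℕ → M)
    (n : ℕ) : ∑ j ∈ range n, ∑ k ∈ range j, g k = ∑ k ∈ range n, (n - (k + 1)) • g k := by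
  simp only [range_eq_Ico, ← sum_Ico_Ico_comm' 0 n fun i _ ↦ g i, sum_const, Nat.card_Ico]

section Ring

variable {R : Type*} [Ring R]

theorem pow_mul_sub_mul_pow (a b : R) (n : ℕ) :
    a ^ n * b - b * a ^ n = ∑ k ∈ range n, a ^ k * (a * b - b * a) * a ^ (n - 1 - k) := by
  have htelescope := sum_range_sub (fun k ↦ a ^ k * b * a ^ (n - k)) n
  simp only [Nat.sub_self, pow_zero, mul_one, one_mul, Nat.sub_zero] at htelescope
  rw [← htelescope]
  refine sum_congr rfl fun k hk ↦ ?_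
  obtain ⟨m, rfl⟩ : ∃ m, n = k + 1 + m := ⟨n - (k + 1), by rw [mem_range] at hk; omega⟩
  rw [show k + 1 + m - (k + 1) = m by omega, show k + 1 + m - k = m + 1 by omega,
    show k + 1 + m - 1 - k = m by omega, pow_succ a k, pow_succ' a m]
  simp only [mul_sub, sub_mul, mul_assoc]

theorem sum_pow_mul_mul_pow_eq_nsmul_add (a b : R) (n : ℕ) :
    ∑ j ∈ range n, a ^ j * b * a ^ (n - 1 - j) =
      n • (b * a ^ (n - 1)) +
        ∑ j ∈ Icc 1 (n - 1), j • (a ^ (n - 1 - j) * (a * b - b * a) * a ^ (j - 1)) := by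
  have hterm : ∀ j ∈ range n, a ^ j * b * a ^ (n - 1 - j) =
      b * a ^ (n - 1) + ∑ k ∈ range j, a ^ k * (a * b - b * a) * a ^ (n - 2 - k) := by
    intro j hj
    obtain ⟨m, hm⟩ : ∃ m, n - 1 = j + m := ⟨n - 1 - j, by rw [mem_range] at hj; omega⟩
    rw [← sub_eq_iff_eq_add', hm, Nat.add_sub_cancel_left, pow_add, ← mul_assoc, ← sub_mul,
      pow_mul_sub_mul_pow, sum_mul]
    refine sum_congr rfl fun k hk ↦ ?_
    rw [mem_range] at hk
    rw [mul_assoc, ← pow_add]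
    congr 2
    omega
  rw [sum_congr rfl hterm, sum_add_distrib, sum_const, card_range,
    sum_range_sum_range_eq_sum_nsmul, ← sum_range_reflect]
  congr 1
  refine (sum_subset (fun j hj ↦ ?_) (fun j hj hj' ↦ ?_) |>.trans
    (sum_congr rfl fun j hj ↦ ?_)).symm
  · rw [mem_Icc] at hj
    rw [mem_range]
    omega
  · obtain rfl : j = 0 := by rw [mem_range] at hj; rw [mem_Icc] at hj'; omega
    rw [zero_smul]
  · rw [mem_range] at hj
    congr 3 <;> omega

end Ring

theorem sum_conjugates_deriv_general (H : Type) [NormedAddCommGroup H]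
    [InnerProductSpace ℂ H]
    (A Q : H →L[ℂ] H) (u : ℂ) (n : ℕ) :
    ∑ j ∈ Finset.range n,
        (u • A - u ^ 2 • Q) ^ j * (A - (2 * u) • Q) * (u • A - u ^ 2 • Q) ^ (n - 1 - j) =
      (n : ℂ) • ((A - (2 * u) • Q) * (u • A - u ^ 2 • Q) ^ (n - 1)) +
        u ^ 2 • ∑ j ∈ Finset.Icc 1 (n - 1),
          (j : ℂ) • ((u • A - u ^ 2 • Q) ^ (n - 1 - j) * (Q * A - A * Q) *
            (u • A - u ^ 2 • Q) ^ (j - 1)) := by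
  have hcomm : (u • A - u ^ 2 • Q) * (A - (2 * u) • Q) - (A - (2 * u) • Q) * (u • A - u ^ 2 • Q)
      = u ^ 2 • (Q * A - A * Q) := by
    simp only [mul_sub, sub_mul, smul_mul_assoc, mul_smul_comm]
    module
  rw [sum_pow_mul_mul_pow_eq_nsmul_add, hcomm, Nat.cast_smul_eq_nsmul, smul_sum]
  congr 1
  refine sum_congr rfl fun j _ ↦ ?_
  rw [mul_smul_comm, smul_mul_assoc, Nat.cast_smul_eq_nsmul, smul_comm]

/-- For bounded operators `A, Q` on a complex Hilbert space, `f(u) = uA − u²Q`,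
`f′(u) = A − 2uQ`, and every `n ≥ 1`:
`Σ_{j=0}^{n−1} f(u)^j f′(u) f(u)^{n−1−j}
  = n·f′(u)f(u)^{n−1} + u²·Σ_{j=1}^{n−1} j·f(u)^{n−1−j}[Q, A]f(u)^{j−1}`,
where `[Q, A] = QA − AQ`. -/
theorem sum_conjugates_deriv (H : Type) [NormedAddCommGroup H]
    [InnerProductSpace ℂ H] [CompleteSpace H]
    (A Q : H →L[ℂ] H) (u : ℂ) (n : ℕ) (hn : 1 ≤ n) :
    ∑ j ∈ Finset.range n,
        (u • A - u ^ 2 • Q) ^ j * (A - (2 * u) • Q) * (u • A - u ^ 2 • Q) ^ (n - 1 - j) =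
      (n : ℂ) • ((A - (2 * u) • Q) * (u • A - u ^ 2 • Q) ^ (n - 1)) +
        u ^ 2 • ∑ j ∈ Finset.Icc 1 (n - 1),
          (j : ℂ) • ((u • A - u ^ 2 • Q) ^ (n - 1 - j) * (Q * A - A * Q) *
            (u • A - u ^ 2 • Q) ^ (j - 1)) :=
  sum_conjugates_deriv_general H A Q u n
end
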